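/- The unknown-SNR target amplitude density g_a(a|d₁,d₂) obtained by averaging the Rayleigh density g_d(a) = (a/(1+d))·exp(−a²/(2(1+d))) over d ∈ [d₁,d₂] with respect to the density 1/((1+d)·(ln(1+d₂) − ln(1+d₁))) equals 2·(exp(−a²/(2(1+d₂))) − exp(−a²/(2(1+d₁))))/(a·(ln(1+d₂) − ln(1+d₁))) for all a > 0 and 0 < d₁ < d₂. -/

import Mathlib

open MeasureTheory Real

/-! Up to the constant factor `2 / (a (log (1 + d₂) - log (1 + d₁)))`, the averaged integrand is
`b / u² · exp (-b / u)` with `u = 1 + d` and `b = a² / 2`, which is exactly the derivative of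
`u ↦ exp (-b / u)`. -/

theorem hasDerivAt_exp_neg_div (b : ℝ) {x : ℝ} (hx : x ≠ 0) :
    HasDerivAt (fun x => exp (-b / x)) (b / x ^ 2 * exp (-b / x)) x := by
  have hinv : HasDerivAt (fun x => -b / x) (b / x ^ 2) x := by
    simpa [div_eq_mul_inv, neg_mul, mul_neg] using (hasDerivAt_inv hx).const_mul (-b)
  simpa [mul_comm] using hinv.exp

theorem integral_div_sq_mul_exp_neg_div (b : ℝ) {u v : ℝ} (hu : 0 < u) (hv : 0 < v) :
    ∫ x in u..v, b / x ^ 2 * exp (-b / x) = exp (-b / v) - exp (-b / u) := by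
  have hne : ∀ x ∈ Set.uIcc u v, x ≠ 0 := fun x hx => (lt_of_lt_of_le (lt_min hu hv) hx.1).ne'
  refine intervalIntegral.integral_eq_sub_of_hasDerivAt
    (fun x hx => hasDerivAt_exp_neg_div b (hne x hx)) (ContinuousOn.intervalIntegrable ?_)
  exact fun x hx => ContinuousAt.continuousWithinAt <| by fun_prop (disch := simpa using hne x hx)

theorem rayleigh_mul_log_uniform_eq (a L d : ℝ) (ha : a ≠ 0) :
    (a / (1 + d)) * exp (-a ^ 2 / (2 * (1 + d))) * (1 / ((1 + d) * L))
      = 2 / (a * L) * ((a ^ 2 / 2) / (1 + d) ^ 2 * exp (-(a ^ 2 / 2) / (1 + d))) := by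
  rw [neg_div', div_div]
  field_simp

/-- Averaging the Rayleigh density g_d(a) over d ∈ [d₁,d₂] with density
1/((1+d)(ln(1+d₂)−ln(1+d₁))) yields the unknown-SNR amplitude density
2(exp(−a²/(2(1+d₂))) − exp(−a²/(2(1+d₁))))/(a(ln(1+d₂)−ln(1+d₁))). -/
theorem unknown_snr_density_formula (a d₁ d₂ : ℝ) (ha : 0 < a) (h1 : 0 < d₁) (h12 : d₁ < d₂) :
    ∫ d in Set.Icc d₁ d₂,
        ((a/(1+d)) * Real.exp (-a^2/(2*(1+d)))) *
          (1/((1+d) * (Real.log (1+d₂) - Real.log (1+d₁))))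
      = 2 * (Real.exp (-a^2/(2*(1+d₂))) - Real.exp (-a^2/(2*(1+d₁))))
          / (a * (Real.log (1+d₂) - Real.log (1+d₁))) := by
  simp_rw [rayleigh_mul_log_uniform_eq a _ _ ha.ne']
  rw [integral_Icc_eq_integral_Ioc, ← intervalIntegral.integral_of_le h12.le,
    intervalIntegral.integral_const_mul, intervalIntegral.integral_comp_add_left
      (fun u => (a ^ 2 / 2) / u ^ 2 * exp (-(a ^ 2 / 2) / u)),
    integral_div_sq_mul_exp_neg_div _ (by linarith) (by linarith)]
  simp only [neg_div', div_div]
  ring
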